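/- arXiv:2307.03642 — 7 statements merged into one kernel-verified Lean document; each statement's English description precedes it below -/
import Mathlib

section
/- Isometry of square-root functions under simultaneous warping: for all f₁, f₂ ∈ 𝒫 and every warping function β ∈ Γ, ∫₀¹ (√((f₁ ⊙ β)(ω)) − √((f₂ ⊙ β)(ω)))² dω = ∫₀¹ (√(f₁(ω)) − √(f₂(ω)))² dω; that is, the L²-distance between the square-root functions of f₁ ⊙ β and f₂ ⊙ β equals the L²-distance between the square-root functions of f₁ and f₂. -/
open MeasureTheory intervalIntegral Set

noncomputable section

/-- A warping function: a continuously differentiable map of `[0,1]` onto itself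
fixing the endpoints, with strictly positive derivative. -/
structure IsWarping (β : ℝ → ℝ) : Prop where
  mapsTo : ∀ ω ∈ Icc (0:ℝ) 1, β ω ∈ Icc (0:ℝ) 1
  zero : β 0 = 0
  one : β 1 = 1
  hasDeriv : ∀ ω ∈ Icc (0:ℝ) 1, HasDerivAt β (deriv β ω) ω
  contDeriv : ContinuousOn (deriv β) (Icc (0:ℝ) 1)
  derivPos : ∀ ω ∈ Icc (0:ℝ) 1, 0 < deriv β ω

/-- The action `(f ⊙ β)(ω) = f(β(ω)) · β'(ω)`. -/
def act (f β : ℝ → ℝ) : ℝ → ℝ := fun ω => f (β ω) * deriv β ω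

/-- A continuous probability density function on `[0,1]`. -/
def IsDensity (f : ℝ → ℝ) : Prop :=
  ContinuousOn f (Icc (0:ℝ) 1) ∧ (∀ ω ∈ Icc (0:ℝ) 1, 0 ≤ f ω) ∧
    (∫ ω in (0:ℝ)..1, f ω) = 1

/-- The Hellinger distance between two densities on `[0,1]`. -/
def Hdist (f₁ f₂ : ℝ → ℝ) : ℝ :=
  Real.sqrt ((1/2) * ∫ ω in (0:ℝ)..1, (Real.sqrt (f₁ ω) - Real.sqrt (f₂ ω))^2)

/-- The Fisher–Rao (Riemannian) distance between two densities on `[0,1]`. -/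
def dR (f₁ f₂ : ℝ → ℝ) : ℝ :=
  Real.arccos (∫ ω in (0:ℝ)..1, Real.sqrt (f₁ ω) * Real.sqrt (f₂ ω))


/-- isometry of square-root functions under simultaneous warping. -/
theorem srf_isometry (f₁ f₂ β : ℝ → ℝ) (h₁ : IsDensity f₁) (h₂ : IsDensity f₂)
    (hβ : IsWarping β) :
    (∫ ω in (0:ℝ)..1, (Real.sqrt (act f₁ β ω) - Real.sqrt (act f₂ β ω))^2) =
      ∫ ω in (0:ℝ)..1, (Real.sqrt (f₁ ω) - Real.sqrt (f₂ ω))^2 := by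
  have huIcc : uIcc (0:ℝ) 1 = Icc (0:ℝ) 1 := uIcc_of_le zero_le_one
  set g : ℝ → ℝ := fun u => (Real.sqrt (f₁ u) - Real.sqrt (f₂ u))^2 with hg
  have key : (∫ ω in (0:ℝ)..1, (g ∘ β) ω * deriv β ω) = ∫ u in (β 0)..(β 1), g u := by
    refine intervalIntegral.integral_comp_mul_deriv' (f' := deriv β)
      (fun x hx => hβ.hasDeriv x (huIcc ▸ hx)) (huIcc ▸ hβ.contDeriv)
      (ContinuousOn.mono ((h₁.1.sqrt.sub h₂.1.sqrt).pow 2) ?_)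
    rw [huIcc]
    exact image_subset_iff.mpr hβ.mapsTo
  rw [hβ.zero, hβ.one] at key
  rw [← key]
  apply intervalIntegral.integral_congr
  intro ω hω
  rw [huIcc] at hω
  have hb := hβ.mapsTo ω hω
  have hd := (hβ.derivPos ω hω).le
  simp only [act, Function.comp, hg]
  rw [Real.sqrt_mul (h₁.2.1 _ hb), Real.sqrt_mul (h₂.2.1 _ hb), ← sub_mul, mul_pow,
    Real.sq_sqrt hd, mul_comm]
end
end

section
/- Consistency of the Hellinger alignment criterion to random warpings: for all f₁, f₂ ∈ 𝒫 and all warping functions β₁, β₂ ∈ Γ, the infimum over β ∈ Γ of H(f₁, f₂ ⊙ β) equals the infimum over β ∈ Γ of H(f₁ ⊙ β₁, (f₂ ⊙ β₂) ⊙ β). -/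
open MeasureTheory intervalIntegral Set

noncomputable section

/-! ### Auxiliary lemmas -/

theorem IsWarping.continuousOn {β : ℝ → ℝ} (hβ : IsWarping β) :
    ContinuousOn β (Icc (0:ℝ) 1) :=
  fun ω hω => ((hβ.hasDeriv ω hω).continuousAt).continuousWithinAt

theorem IsWarping.deriv_eqOn {p q : ℝ → ℝ} (hp : IsWarping p) (hq : IsWarping q)
    (h : EqOn p q (Icc (0:ℝ) 1)) : ∀ ω ∈ Icc (0:ℝ) 1, deriv p ω = deriv q ω := by
  intro ω hω
  have h1 : HasDerivWithinAt p (deriv p ω) (Icc (0:ℝ) 1) ω :=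
    (hp.hasDeriv ω hω).hasDerivWithinAt
  have h2 : HasDerivWithinAt p (deriv q ω) (Icc (0:ℝ) 1) ω :=
    ((hq.hasDeriv ω hω).hasDerivWithinAt).congr (fun x hx => h hx) (h hω)
  exact UniqueDiffWithinAt.eq_deriv _ (uniqueDiffOn_Icc_zero_one ω hω) h1 h2

theorem IsWarping.hasDerivAt_comp {p q : ℝ → ℝ} (hp : IsWarping p) (hq : IsWarping q)
    {ω : ℝ} (hω : ω ∈ Icc (0:ℝ) 1) :
    HasDerivAt (p ∘ q) (deriv p (q ω) * deriv q ω) ω :=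
  (hp.hasDeriv _ (hq.mapsTo ω hω)).comp ω (hq.hasDeriv ω hω)

theorem IsWarping.comp {p q : ℝ → ℝ} (hp : IsWarping p) (hq : IsWarping q) :
    IsWarping (p ∘ q) where
  mapsTo ω hω := hp.mapsTo _ (hq.mapsTo ω hω)
  zero := by simp [Function.comp, hq.zero, hp.zero]
  one := by simp [Function.comp, hq.one, hp.one]
  hasDeriv ω hω := by
    have h := hp.hasDerivAt_comp hq hω
    rwa [h.deriv]
  contDeriv := by
    have he : EqOn (fun ω => deriv p (q ω) * deriv q ω) (deriv (p ∘ q)) (Icc (0:ℝ) 1) :=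
      fun ω hω => ((hp.hasDerivAt_comp hq hω).deriv).symm
    exact ContinuousOn.congr
      ((hp.contDeriv.comp hq.continuousOn (fun x hx => hq.mapsTo x hx)).mul hq.contDeriv)
      (fun ω hω => (he hω).symm)
  derivPos ω hω := by
    rw [(hp.hasDerivAt_comp hq hω).deriv]
    exact mul_pos (hp.derivPos _ (hq.mapsTo ω hω)) (hq.derivPos ω hω)

theorem act_comp_eqOn (f : ℝ → ℝ) {p q : ℝ → ℝ} (hp : IsWarping p) (hq : IsWarping q) :
    EqOn (act (act f p) q) (act f (p ∘ q)) (Icc (0:ℝ) 1) := by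
  intro ω hω
  simp only [act, Function.comp_apply]
  rw [(hp.hasDerivAt_comp hq hω).deriv]
  ring

theorem act_congr (f : ℝ → ℝ) {p q : ℝ → ℝ} (hp : IsWarping p) (hq : IsWarping q)
    (h : EqOn p q (Icc (0:ℝ) 1)) : EqOn (act f p) (act f q) (Icc (0:ℝ) 1) := by
  intro ω hω
  simp only [act]
  rw [h hω, hp.deriv_eqOn hq h ω hω]

theorem act_continuousOn {f β : ℝ → ℝ} (hf : ContinuousOn f (Icc (0:ℝ) 1))
    (hβ : IsWarping β) : ContinuousOn (act f β) (Icc (0:ℝ) 1) :=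
  (hf.comp hβ.continuousOn (fun x hx => hβ.mapsTo x hx)).mul hβ.contDeriv

theorem Hdist_congr {a a' b b' : ℝ → ℝ} (ha : EqOn a a' (Icc (0:ℝ) 1))
    (hb : EqOn b b' (Icc (0:ℝ) 1)) : Hdist a b = Hdist a' b' := by
  unfold Hdist
  have : (∫ ω in (0:ℝ)..1, (Real.sqrt (a ω) - Real.sqrt (b ω))^2)
      = ∫ ω in (0:ℝ)..1, (Real.sqrt (a' ω) - Real.sqrt (b' ω))^2 := by
    apply intervalIntegral.integral_congr
    intro ω hω
    rw [uIcc_of_le zero_le_one] at hω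
    simp only []
    rw [ha hω, hb hω]
  rw [this]

/-- The Hellinger distance is invariant under simultaneous warping. -/
theorem hellinger_invariance {F G γ : ℝ → ℝ} (hγ : IsWarping γ)
    (hF : ContinuousOn F (Icc (0:ℝ) 1)) (hG : ContinuousOn G (Icc (0:ℝ) 1)) :
    Hdist (act F γ) (act G γ) = Hdist F G := by
  unfold Hdist
  have key : (∫ ω in (0:ℝ)..1, (Real.sqrt (act F γ ω) - Real.sqrt (act G γ ω))^2)
      = ∫ ω in (0:ℝ)..1,
          deriv γ ω • ((fun u => (Real.sqrt (F u) - Real.sqrt (G u))^2) ∘ γ) ω := by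
    apply intervalIntegral.integral_congr
    intro ω hω
    rw [uIcc_of_le zero_le_one] at hω
    have hd : (0:ℝ) ≤ deriv γ ω := (hγ.derivPos ω hω).le
    simp only [act, Function.comp_apply, smul_eq_mul]
    rw [Real.sqrt_mul' _ hd, Real.sqrt_mul' _ hd]
    have h1 : Real.sqrt (F (γ ω)) * Real.sqrt (deriv γ ω)
        - Real.sqrt (G (γ ω)) * Real.sqrt (deriv γ ω)
        = (Real.sqrt (F (γ ω)) - Real.sqrt (G (γ ω))) * Real.sqrt (deriv γ ω) := by ring
    rw [h1, mul_pow, Real.sq_sqrt hd]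
    ring
  have huIcc : uIcc (0:ℝ) 1 = Icc (0:ℝ) 1 := uIcc_of_le zero_le_one
  have hcont : ContinuousOn (fun u => (Real.sqrt (F u) - Real.sqrt (G u))^2) (Icc (0:ℝ) 1) := by
    apply ContinuousOn.pow
    exact (Real.continuous_sqrt.comp_continuousOn hF).sub
      (Real.continuous_sqrt.comp_continuousOn hG)
  have hsub : γ '' uIcc (0:ℝ) 1 ⊆ Icc (0:ℝ) 1 := by
    rw [huIcc]
    rintro _ ⟨x, hx, rfl⟩
    exact hγ.mapsTo x hx
  have := intervalIntegral.integral_comp_smul_deriv''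
    (f := γ) (f' := deriv γ) (g := fun u => (Real.sqrt (F u) - Real.sqrt (G u))^2)
    (a := 0) (b := 1)
    (by rw [huIcc]; exact hγ.continuousOn)
    (by
      intro x hx
      simp only [min_eq_left zero_le_one, max_eq_right zero_le_one] at hx
      exact ((hγ.hasDeriv x (Ioo_subset_Icc_self hx)).hasDerivWithinAt))
    (by rw [huIcc]; exact hγ.contDeriv)
    (hcont.mono hsub)
  rw [key, this, hγ.zero, hγ.one]

/-! ### Extension of a warping to a global increasing C¹ map of ℝ, and its inverse -/

/-- Extension of a warping to a global map of ℝ. -/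
def extWarp (β : ℝ → ℝ) : ℝ → ℝ := fun x =>
  if x < 0 then deriv β 0 * x else if x ≤ 1 then β x else deriv β 1 * (x - 1) + 1

def extDerivW (β : ℝ → ℝ) : ℝ → ℝ := fun x =>
  if x < 0 then deriv β 0 else if x ≤ 1 then deriv β x else deriv β 1

variable {β : ℝ → ℝ}

theorem extWarp_eqOn : EqOn (extWarp β) β (Icc (0:ℝ) 1) := by
  intro x hx
  simp only [extWarp, if_neg (not_lt.2 hx.1), if_pos hx.2]

theorem extDeriv_eqOn : EqOn (extDerivW β) (deriv β) (Icc (0:ℝ) 1) := by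
  intro x hx
  simp only [extDerivW, if_neg (not_lt.2 hx.1), if_pos hx.2]

theorem extDeriv_pos (hβ : IsWarping β) : ∀ x, 0 < extDerivW β x := by
  intro x
  unfold extDerivW
  split_ifs with h1 h2
  · exact hβ.derivPos 0 ⟨le_refl _, zero_le_one⟩
  · exact hβ.derivPos x ⟨not_lt.1 h1, h2⟩
  · exact hβ.derivPos 1 ⟨zero_le_one, le_refl _⟩

theorem hasDerivAt_extWarp (hβ : IsWarping β) (x : ℝ) :
    HasDerivAt (extWarp β) (extDerivW β x) x := by
  have h0 : (0:ℝ) ∈ Icc (0:ℝ) 1 := ⟨le_refl _, zero_le_one⟩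
  have h1 : (1:ℝ) ∈ Icc (0:ℝ) 1 := ⟨zero_le_one, le_refl _⟩
  have hl : ∀ y, HasDerivAt (fun x => deriv β 0 * x) (deriv β 0) y := by
    intro y
    simpa using (hasDerivAt_id y).const_mul (deriv β 0)
  have hr : ∀ y, HasDerivAt (fun x => deriv β 1 * (x - 1) + 1) (deriv β 1) y := by
    intro y
    simpa using (((hasDerivAt_id y).sub_const 1).const_mul (deriv β 1)).add_const 1
  rcases lt_trichotomy x 0 with hx | hx | hx
  · have : extDerivW β x = deriv β 0 := if_pos hx
    rw [this]
    refine (hl x).congr_of_eventuallyEq ?_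
    filter_upwards [Iio_mem_nhds hx] with y hy
    exact if_pos hy
  · subst hx
    have hde : extDerivW β 0 = deriv β 0 := by
      simp [extDerivW, zero_le_one]
    rw [hde]
    have hright : HasDerivWithinAt (extWarp β) (deriv β 0) (Ici (0:ℝ)) 0 := by
      refine ((hβ.hasDeriv 0 h0).hasDerivWithinAt).congr_of_eventuallyEq ?_
        (extWarp_eqOn h0)
      have hmem : Ici (0:ℝ) ∩ Iio 1 ∈ nhdsWithin (0:ℝ) (Ici 0) :=
        Filter.inter_mem self_mem_nhdsWithin
          (mem_nhdsWithin_of_mem_nhds (Iio_mem_nhds one_pos))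
      filter_upwards [hmem] with y hy
      exact extWarp_eqOn ⟨hy.1, hy.2.le⟩
    have hleft : HasDerivWithinAt (extWarp β) (deriv β 0) (Iic (0:ℝ)) 0 := by
      refine ((hl 0).hasDerivWithinAt).congr ?_ ?_
      · intro y hy
        rcases lt_or_eq_of_le (mem_Iic.mp hy) with h | h
        · exact if_pos h
        · subst h
          simp [extWarp, hβ.zero, zero_le_one]
      · simp [extWarp, hβ.zero, zero_le_one]
    have := hleft.union hright
    rwa [Iic_union_Ici, hasDerivWithinAt_univ] at this
  · rcases lt_trichotomy x 1 with hx1 | hx1 | hx1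
    · have : extDerivW β x = deriv β x := extDeriv_eqOn ⟨hx.le, hx1.le⟩
      rw [this]
      refine ((hβ.hasDeriv x ⟨hx.le, hx1.le⟩)).congr_of_eventuallyEq ?_
      filter_upwards [Ioo_mem_nhds hx hx1] with y hy
      exact extWarp_eqOn ⟨hy.1.le, hy.2.le⟩
    · subst hx1
      have hde : extDerivW β 1 = deriv β 1 := extDeriv_eqOn h1
      rw [hde]
      have hleft : HasDerivWithinAt (extWarp β) (deriv β 1) (Iic (1:ℝ)) 1 := by
        refine ((hβ.hasDeriv 1 h1).hasDerivWithinAt).congr_of_eventuallyEq ?_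
          (extWarp_eqOn h1)
        have hmem : Iic (1:ℝ) ∩ Ioi 0 ∈ nhdsWithin (1:ℝ) (Iic 1) :=
          Filter.inter_mem self_mem_nhdsWithin
            (mem_nhdsWithin_of_mem_nhds (Ioi_mem_nhds one_pos))
        filter_upwards [hmem] with y hy
        exact extWarp_eqOn ⟨hy.2.le, hy.1⟩
      have hright : HasDerivWithinAt (extWarp β) (deriv β 1) (Ici (1:ℝ)) 1 := by
        refine ((hr 1).hasDerivWithinAt).congr ?_ ?_
        · intro y hy
          rcases lt_or_eq_of_le (mem_Ici.mp hy) with h | h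
          · simp only [extWarp, if_neg (not_lt.2 (zero_le_one.trans h.le)),
              if_neg (not_le.2 h)]
          · rw [← h]
            simp [extWarp, hβ.one, zero_le_one]
        · simp [extWarp, hβ.one, zero_le_one]
      have := hleft.union hright
      rwa [Iic_union_Ici, hasDerivWithinAt_univ] at this
    · have : extDerivW β x = deriv β 1 := by
        simp only [extDerivW, if_neg (not_lt.2 (zero_le_one.trans hx1.le)),
          if_neg (not_le.2 hx1)]
      rw [this]
      refine (hr x).congr_of_eventuallyEq ?_
      filter_upwards [Ioi_mem_nhds hx1] with y hy
      simp only [extWarp, if_neg (not_lt.2 (zero_le_one.trans (le_of_lt (mem_Ioi.mp hy)))),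
        if_neg (not_le.2 (mem_Ioi.mp hy))]

theorem extWarp_strictMono (hβ : IsWarping β) : StrictMono (extWarp β) := by
  apply strictMono_of_deriv_pos
  intro x
  rw [(hasDerivAt_extWarp hβ x).deriv]
  exact extDeriv_pos hβ x

theorem extWarp_surjective (hβ : IsWarping β) : Function.Surjective (extWarp β) := by
  intro y
  rcases lt_or_ge y 0 with hy | hy
  · refine ⟨y / deriv β 0, ?_⟩
    have hd := hβ.derivPos 0 ⟨le_refl _, zero_le_one⟩
    have hxneg : y / deriv β 0 < 0 := div_neg_of_neg_of_pos hy hd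
    rw [extWarp, if_pos hxneg, mul_div_cancel₀ _ (ne_of_gt hd)]
  · rcases le_or_gt y 1 with hy1 | hy1
    · have : y ∈ Icc (β 0) (β 1) := by rw [hβ.zero, hβ.one]; exact ⟨hy, hy1⟩
      obtain ⟨x, hx, hxy⟩ := intermediate_value_Icc zero_le_one hβ.continuousOn this
      exact ⟨x, by rw [extWarp_eqOn hx, hxy]⟩
    · refine ⟨(y - 1) / deriv β 1 + 1, ?_⟩
      have hd := hβ.derivPos 1 ⟨zero_le_one, le_refl _⟩
      have hxgt : (1:ℝ) < (y - 1) / deriv β 1 + 1 := by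
        have : 0 < (y - 1) / deriv β 1 := div_pos (by linarith) hd
        linarith
      rw [extWarp, if_neg (not_lt.2 (zero_le_one.trans hxgt.le)), if_neg (not_le.2 hxgt)]
      field_simp
      ring

/-- Every warping has an inverse warping. -/
theorem exists_invWarp (hβ : IsWarping β) : ∃ g : ℝ → ℝ, IsWarping g ∧
    (∀ x ∈ Icc (0:ℝ) 1, g (β x) = x) ∧ (∀ y ∈ Icc (0:ℝ) 1, β (g y) = y) := by
  set e := StrictMono.orderIsoOfSurjective (extWarp β) (extWarp_strictMono hβ)
    (extWarp_surjective hβ) with he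
  set g : ℝ → ℝ := fun y => e.symm y with hg
  have hBg : ∀ y, extWarp β (g y) = y := by
    intro y
    have : e (e.symm y) = y := e.apply_symm_apply y
    rwa [show ⇑e = extWarp β from StrictMono.coe_orderIsoOfSurjective _ _ _] at this
  have hgB : ∀ x, g (extWarp β x) = x := by
    intro x
    have : e.symm (e x) = x := e.symm_apply_apply x
    rwa [show ⇑e = extWarp β from StrictMono.coe_orderIsoOfSurjective _ _ _] at this
  have hgcont : Continuous g := e.symm.continuous
  have hg0 : g 0 = 0 := by
    have := hgB 0
    rwa [extWarp_eqOn ⟨le_refl _, zero_le_one⟩, hβ.zero] at this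
  have hg1 : g 1 = 1 := by
    have := hgB 1
    rwa [extWarp_eqOn ⟨zero_le_one, le_refl _⟩, hβ.one] at this
  have hgmono : Monotone g := e.symm.monotone
  have hmapsTo : ∀ y ∈ Icc (0:ℝ) 1, g y ∈ Icc (0:ℝ) 1 := by
    intro y hy
    constructor
    · rw [← hg0]; exact hgmono hy.1
    · rw [← hg1]; exact hgmono hy.2
  have hgderiv : ∀ y, HasDerivAt g (extDerivW β (g y))⁻¹ y := by
    intro y
    exact HasDerivAt.of_local_left_inverse hgcont.continuousAt
      (hasDerivAt_extWarp hβ (g y)) (ne_of_gt (extDeriv_pos hβ (g y)))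
      (Filter.Eventually.of_forall hBg)
  have hderiv_g : deriv g = fun y => (extDerivW β (g y))⁻¹ :=
    funext fun y => (hgderiv y).deriv
  have hwarp : IsWarping g := by
    refine ⟨hmapsTo, hg0, hg1, ?_, ?_, ?_⟩
    · intro ω hω
      rw [hderiv_g]
      exact hgderiv ω
    · rw [hderiv_g]
      have hD : ContinuousOn (extDerivW β) (Icc (0:ℝ) 1) :=
        hβ.contDeriv.congr extDeriv_eqOn
      exact (hD.comp hgcont.continuousOn hmapsTo).inv₀
        (fun y hy => ne_of_gt (extDeriv_pos hβ (g y)))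
    · intro ω hω
      rw [hderiv_g]
      exact inv_pos.2 (extDeriv_pos hβ (g ω))
  refine ⟨g, hwarp, ?_, ?_⟩
  · intro x hx
    rw [← extWarp_eqOn (β:=β) hx]
    exact hgB x
  · intro y hy
    rw [← extWarp_eqOn (β:=β) (hmapsTo y hy)]
    exact hBg y

/-- consistency of the Hellinger alignment criterion to random warpings. -/
theorem hellinger_inf_consistency (f₁ f₂ β₁ β₂ : ℝ → ℝ)
    (h₁ : IsDensity f₁) (h₂ : IsDensity f₂)
    (hβ₁ : IsWarping β₁) (hβ₂ : IsWarping β₂) :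
    sInf ((fun β => Hdist f₁ (act f₂ β)) '' {β | IsWarping β}) =
      sInf ((fun β => Hdist (act f₁ β₁) (act (act f₂ β₂) β)) '' {β | IsWarping β}) := by
  obtain ⟨g₁, hg₁, hg₁β, hβg₁⟩ := exists_invWarp hβ₁
  obtain ⟨g₂, hg₂, hg₂β, hβg₂⟩ := exists_invWarp hβ₂
  have hset : ((fun β => Hdist f₁ (act f₂ β)) '' {β | IsWarping β}) =
      ((fun β => Hdist (act f₁ β₁) (act (act f₂ β₂) β)) '' {β | IsWarping β}) := by
    apply Set.Subset.antisymm
    · rintro v ⟨β, hβ, rfl⟩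
      have hβ : IsWarping β := hβ
      have hδ : IsWarping (g₂ ∘ (β ∘ β₁)) := hg₂.comp (hβ.comp hβ₁)
      refine ⟨g₂ ∘ (β ∘ β₁), hδ, ?_⟩
      have heq : EqOn (β₂ ∘ (g₂ ∘ (β ∘ β₁))) (β ∘ β₁) (Icc (0:ℝ) 1) := by
        intro x hx
        exact hβg₂ _ (hβ.mapsTo _ (hβ₁.mapsTo x hx))
      calc Hdist (act f₁ β₁) (act (act f₂ β₂) (g₂ ∘ (β ∘ β₁)))
          = Hdist (act f₁ β₁) (act f₂ (β₂ ∘ (g₂ ∘ (β ∘ β₁)))) :=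
            Hdist_congr (fun _ _ => rfl) (act_comp_eqOn f₂ hβ₂ hδ)
        _ = Hdist (act f₁ β₁) (act f₂ (β ∘ β₁)) :=
            Hdist_congr (fun _ _ => rfl)
              (act_congr f₂ (hβ₂.comp hδ) (hβ.comp hβ₁) heq)
        _ = Hdist (act f₁ β₁) (act (act f₂ β) β₁) :=
            Hdist_congr (fun _ _ => rfl) (act_comp_eqOn f₂ hβ hβ₁).symm
        _ = Hdist f₁ (act f₂ β) :=
            hellinger_invariance hβ₁ h₁.1 (act_continuousOn h₂.1 hβ)
    · rintro v ⟨β, hβ, rfl⟩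
      have hβ : IsWarping β := hβ
      have hγ : IsWarping (β₂ ∘ (β ∘ g₁)) := hβ₂.comp (hβ.comp hg₁)
      refine ⟨β₂ ∘ (β ∘ g₁), hγ, ?_⟩
      have heq : EqOn ((β₂ ∘ (β ∘ g₁)) ∘ β₁) (β₂ ∘ β) (Icc (0:ℝ) 1) := by
        intro x hx
        simp only [Function.comp_apply]
        rw [hg₁β x hx]
      calc Hdist f₁ (act f₂ (β₂ ∘ (β ∘ g₁)))
          = Hdist (act f₁ β₁) (act (act f₂ (β₂ ∘ (β ∘ g₁))) β₁) :=
            (hellinger_invariance hβ₁ h₁.1 (act_continuousOn h₂.1 hγ)).symm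
        _ = Hdist (act f₁ β₁) (act f₂ ((β₂ ∘ (β ∘ g₁)) ∘ β₁)) :=
            Hdist_congr (fun _ _ => rfl) (act_comp_eqOn f₂ hγ hβ₁)
        _ = Hdist (act f₁ β₁) (act f₂ (β₂ ∘ β)) :=
            Hdist_congr (fun _ _ => rfl)
              (act_congr f₂ (hγ.comp hβ₁) (hβ₂.comp hβ) heq)
        _ = Hdist (act f₁ β₁) (act (act f₂ β₂) β) :=
            Hdist_congr (fun _ _ => rfl) (act_comp_eqOn f₂ hβ₂ hβ).symm
  rw [hset]
end
end

section
/- Inverse symmetry of Hellinger alignment: for all f₁, f₂ ∈ 𝒫 and every β ∈ Γ, H(f₁, f₂ ⊙ β) = H(f₁ ⊙ β⁻¹, f₂); consequently, if β̂ ∈ Γ minimizes β ↦ H(f₁, f₂ ⊙ β) over Γ, then β̂⁻¹ minimizes β ↦ H(f₁ ⊙ β, f₂) over Γ. -/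
open MeasureTheory intervalIntegral Set

noncomputable section

namespace HellingerAux

variable {β γ f₁ f₂ : ℝ → ℝ}

lemma warping_contOn (hβ : IsWarping β) : ContinuousOn β (Icc 0 1) :=
  fun x hx => (hβ.hasDeriv x hx).continuousAt.continuousWithinAt

lemma chain_one (hβ : IsWarping β) (hγ : IsWarping γ)
    (hinv₁ : ∀ ω ∈ Icc (0:ℝ) 1, γ (β ω) = ω) :
    ∀ ω ∈ Icc (0:ℝ) 1, deriv γ (β ω) * deriv β ω = 1 := by
  intro ω hω
  have hb := hβ.hasDeriv ω hω
  have hg := hγ.hasDeriv (β ω) (hβ.mapsTo ω hω)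
  have hcomp : HasDerivWithinAt (γ ∘ β) (deriv γ (β ω) * deriv β ω) (Icc 0 1) ω :=
    (hg.comp ω hb).hasDerivWithinAt
  have hid : HasDerivWithinAt (γ ∘ β) (1:ℝ) (Icc 0 1) ω :=
    (hasDerivWithinAt_id ω _).congr (fun x hx => hinv₁ x hx) (hinv₁ ω hω)
  have hud : UniqueDiffWithinAt ℝ (Icc (0:ℝ) 1) ω := uniqueDiffOn_Icc zero_lt_one ω hω
  calc deriv γ (β ω) * deriv β ω = derivWithin (γ ∘ β) (Icc 0 1) ω := (hcomp.derivWithin hud).symm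
    _ = 1 := hid.derivWithin hud

lemma key (h₁ : IsDensity f₁) (h₂ : IsDensity f₂) (hβ : IsWarping β) (hγ : IsWarping γ)
    (hinv₁ : ∀ ω ∈ Icc (0:ℝ) 1, γ (β ω) = ω) :
    Hdist f₁ (act f₂ β) = Hdist (act f₁ γ) f₂ := by
  set ψ : ℝ → ℝ := fun u => (Real.sqrt (f₁ (γ u) * deriv γ u) - Real.sqrt (f₂ u))^2 with hψ
  have hγcont : ContinuousOn γ (Icc 0 1) := warping_contOn hγ
  have hψcont : ContinuousOn ψ (Icc (0:ℝ) 1) := by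
    apply ContinuousOn.pow
    exact ((h₁.1.comp hγcont hγ.mapsTo).mul hγ.contDeriv).sqrt.sub h₂.1.sqrt
  have huicc : uIcc (0:ℝ) 1 = Icc 0 1 := uIcc_of_le zero_le_one
  have hcv : (∫ ω in (0:ℝ)..1, deriv β ω • (ψ ∘ β) ω) = ∫ u in (0:ℝ)..1, ψ u := by
    have h := intervalIntegral.integral_comp_smul_deriv' (f := β) (f' := deriv β) (g := ψ)
      (a := 0) (b := 1) (fun x hx => hβ.hasDeriv x (huicc ▸ hx)) (huicc ▸ hβ.contDeriv)
      (hψcont.mono (by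
        rw [huicc]
        rintro y ⟨x, hx, rfl⟩
        exact hβ.mapsTo x hx))
    rwa [hβ.zero, hβ.one] at h
  have hpt : EqOn (fun ω => (Real.sqrt (f₁ ω) - Real.sqrt (f₂ (β ω) * deriv β ω))^2)
      (fun ω => deriv β ω • (ψ ∘ β) ω) (uIcc (0:ℝ) 1) := by
    rw [huicc]
    intro ω hω
    have hc := hβ.derivPos ω hω
    have hβω := hβ.mapsTo ω hω
    have hdγ := hγ.derivPos (β ω) hβω
    have hprod := chain_one hβ hγ hinv₁ ω hω
    have h1 : 0 ≤ f₁ ω := h₁.2.1 ω hω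
    have h2 : 0 ≤ f₂ (β ω) := h₂.2.1 (β ω) hβω
    have e1 : Real.sqrt (f₁ ω * deriv γ (β ω)) * Real.sqrt (deriv β ω) = Real.sqrt (f₁ ω) := by
      rw [← Real.sqrt_mul (mul_nonneg h1 hdγ.le), mul_assoc, hprod, mul_one]
    have e2 : Real.sqrt (f₂ (β ω)) * Real.sqrt (deriv β ω)
        = Real.sqrt (f₂ (β ω) * deriv β ω) := (Real.sqrt_mul h2 _).symm
    show (Real.sqrt (f₁ ω) - Real.sqrt (f₂ (β ω) * deriv β ω))^2 = deriv β ω • (ψ ∘ β) ω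
    calc (Real.sqrt (f₁ ω) - Real.sqrt (f₂ (β ω) * deriv β ω))^2
        = ((Real.sqrt (f₁ ω * deriv γ (β ω)) - Real.sqrt (f₂ (β ω))) * Real.sqrt (deriv β ω))^2 := by
          rw [sub_mul, e1, e2]
      _ = (Real.sqrt (f₁ (γ (β ω)) * deriv γ (β ω)) - Real.sqrt (f₂ (β ω)))^2 * deriv β ω := by
          rw [mul_pow, Real.sq_sqrt hc.le, hinv₁ ω hω]
      _ = deriv β ω • (ψ ∘ β) ω := by
          simp only [hψ, Function.comp_apply, smul_eq_mul]; ring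
  have hint : (∫ ω in (0:ℝ)..1, (Real.sqrt (f₁ ω) - Real.sqrt (f₂ (β ω) * deriv β ω))^2)
      = ∫ u in (0:ℝ)..1, ψ u := by
    rw [intervalIntegral.integral_congr hpt, hcv]
  simp only [Hdist, act, hψ] at hint ⊢
  rw [hint]




lemma exists_inverse (hβ : IsWarping β) :
    ∃ δ, IsWarping δ ∧ (∀ ω ∈ Icc (0:ℝ) 1, δ (β ω) = ω) ∧ (∀ ω ∈ Icc (0:ℝ) 1, β (δ ω) = ω) := by
  set d0 := deriv β 0 with hd0
  set d1 := deriv β 1 with hd1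
  have hd0pos : 0 < d0 := hβ.derivPos 0 (by constructor <;> norm_num)
  have hd1pos : 0 < d1 := hβ.derivPos 1 (by constructor <;> norm_num)
  set B : ℝ → ℝ := fun u => if u < 0 then d0 * u else if 1 < u then 1 + d1 * (u - 1) else β u
    with hBdef
  set D : ℝ → ℝ := fun u => if u < 0 then d0 else if 1 < u then d1 else deriv β u with hDdef
  have hBIcc : ∀ u ∈ Icc (0:ℝ) 1, B u = β u := by
    intro u hu
    simp only [hBdef, if_neg (not_lt.mpr hu.1), if_neg (not_lt.mpr hu.2)]
  have hDIcc : ∀ u ∈ Icc (0:ℝ) 1, D u = deriv β u := by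
    intro u hu
    simp only [hDdef, if_neg (not_lt.mpr hu.1), if_neg (not_lt.mpr hu.2)]
  have hB0 : B 0 = 0 := by rw [hBIcc 0 (by norm_num)]; exact hβ.zero
  have hB1 : B 1 = 1 := by rw [hBIcc 1 (by norm_num)]; exact hβ.one
  have hB : ∀ x, HasDerivAt B (D x) x := by
    intro x
    rcases lt_trichotomy x 0 with hx | rfl | hx0
    · -- x < 0
      have : HasDerivAt (fun u => d0 * u) d0 x := by
        simpa using (hasDerivAt_id x).const_mul d0
      have heq : (fun u => d0 * u) =ᶠ[nhds x] B :=
        Filter.eventuallyEq_of_mem (Iio_mem_nhds hx) (fun u hu => by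
          simp only [hBdef]; rw [if_pos (mem_Iio.mp hu)])
      simp only [hDdef, if_pos hx]
      exact this.congr_of_eventuallyEq heq.symm
    · -- x = 0
      have hleft : HasDerivWithinAt B d0 (Iic 0) 0 := by
        have : HasDerivAt (fun u => d0 * u) d0 0 := by
          simpa using (hasDerivAt_id (0:ℝ)).const_mul d0
        refine this.hasDerivWithinAt.congr (fun u hu => ?_) ?_
        · rcases lt_or_eq_of_le (mem_Iic.mp hu) with h | rfl
          · simp only [hBdef, if_pos h]
          · simpa using hB0
        · simpa using hB0
      have hright : HasDerivWithinAt B d0 (Icc 0 1) 0 := by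
        have h0 : (0:ℝ) ∈ Icc (0:ℝ) 1 := by norm_num
        exact ((hβ.hasDeriv 0 h0).hasDerivWithinAt).congr (fun u hu => hBIcc u hu) (hBIcc 0 h0)
      have hu : HasDerivWithinAt B d0 (Iic 0 ∪ Icc 0 1) 0 := hleft.union hright
      have hset : Iic (0:ℝ) ∪ Icc 0 1 = Iic 1 := by
        ext u; simp only [mem_union, mem_Iic, mem_Icc]; constructor
        · rintro (h | ⟨_, h⟩) <;> linarith
        · intro h; rcases le_or_gt u 0 with h' | h'
          · exact Or.inl h'
          · exact Or.inr ⟨h'.le, h⟩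
      rw [hset] at hu
      have : HasDerivAt B d0 0 := hu.hasDerivAt (Iic_mem_nhds zero_lt_one)
      simpa only [hDdef, lt_irrefl, if_neg (lt_irrefl (0:ℝ)), if_neg (by norm_num : ¬(1:ℝ) < 0)]
        using this
    rcases lt_trichotomy x 1 with hx1 | rfl | hx1
    · -- 0 < x < 1
      have heq : β =ᶠ[nhds x] B :=
        Filter.eventuallyEq_of_mem (Ioo_mem_nhds hx0 hx1) (fun u hu =>
          (hBIcc u ⟨hu.1.le, hu.2.le⟩).symm)
      have := (hβ.hasDeriv x ⟨hx0.le, hx1.le⟩).congr_of_eventuallyEq heq.symm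
      simpa only [hDdef, if_neg (not_lt.mpr hx0.le), if_neg (not_lt.mpr hx1.le)] using this
    · -- x = 1
      have hright : HasDerivWithinAt B d1 (Ici 1) 1 := by
        have : HasDerivAt (fun u => 1 + d1 * (u - 1)) d1 1 := by
          simpa using (((hasDerivAt_id (1:ℝ)).sub_const 1).const_mul d1).const_add 1
        refine this.hasDerivWithinAt.congr (fun u hu => ?_) ?_
        · rcases lt_or_eq_of_le (mem_Ici.mp hu) with h | rfl
          · simp only [hBdef, if_neg (by linarith : ¬u < 0), if_pos h]
          · simp [hB1]
        · simp [hB1]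
      have hleft : HasDerivWithinAt B d1 (Icc 0 1) 1 := by
        have h1 : (1:ℝ) ∈ Icc (0:ℝ) 1 := by norm_num
        exact ((hβ.hasDeriv 1 h1).hasDerivWithinAt).congr (fun u hu => hBIcc u hu) (hBIcc 1 h1)
      have hu : HasDerivWithinAt B d1 (Icc 0 1 ∪ Ici 1) 1 := hleft.union hright
      have hset2 : Icc (0:ℝ) 1 ∪ Ici 1 = Ici 0 := by
        ext u; simp only [mem_union, mem_Icc, mem_Ici]; constructor
        · rintro (⟨h, _⟩ | h) <;> linarith
        · intro h; rcases le_or_gt u 1 with h' | h'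
          · exact Or.inl ⟨h, h'⟩
          · exact Or.inr h'.le
      rw [hset2] at hu
      have : HasDerivAt B d1 1 := hu.hasDerivAt (Ici_mem_nhds zero_lt_one)
      simpa only [hDdef, if_neg (by norm_num : ¬(1:ℝ) < 0), if_neg (lt_irrefl (1:ℝ))] using this
    · -- 1 < x
      have : HasDerivAt (fun u => 1 + d1 * (u - 1)) d1 x := by
        simpa using (((hasDerivAt_id x).sub_const 1).const_mul d1).const_add 1
      have heq : (fun u => 1 + d1 * (u - 1)) =ᶠ[nhds x] B :=
        Filter.eventuallyEq_of_mem (Ioi_mem_nhds hx1) (fun u hu => by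
          simp only [hBdef, if_neg (by exact not_lt.mpr (by linarith [mem_Ioi.mp hu] : (0:ℝ) ≤ u)),
            if_pos (mem_Ioi.mp hu)])
      simp only [hDdef, if_neg (not_lt.mpr (by linarith : (0:ℝ) ≤ x)), if_pos hx1]
      exact this.congr_of_eventuallyEq heq.symm
  have hDpos : ∀ x, 0 < D x := by
    intro x
    simp only [hDdef]
    split_ifs with h1 h2
    · exact hd0pos
    · exact hd1pos
    · exact hβ.derivPos x ⟨not_lt.mp h1, not_lt.mp h2⟩
  have hmono : StrictMono B := strictMono_of_deriv_pos (fun x => by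
    rw [(hB x).deriv]; exact hDpos x)
  have hsurj : Function.Surjective B := by
    intro y
    rcases lt_trichotomy y 0 with hy | rfl | hy0
    · refine ⟨y / d0, ?_⟩
      have : y / d0 < 0 := div_neg_of_neg_of_pos hy hd0pos
      simp only [hBdef, if_pos this]
      field_simp
    · exact ⟨0, hB0⟩
    rcases le_or_gt y 1 with hy1 | hy1
    · have : y ∈ Icc (β 0) (β 1) := by rw [hβ.zero, hβ.one]; exact ⟨hy0.le, hy1⟩
      obtain ⟨x, hx, hxy⟩ := intermediate_value_Icc zero_le_one (warping_contOn hβ) this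
      exact ⟨x, by rw [hBIcc x hx]; exact hxy⟩
    · refine ⟨1 + (y - 1) / d1, ?_⟩
      have h1 : (0:ℝ) < (y - 1) / d1 := div_pos (by linarith) hd1pos
      simp only [hBdef, if_neg (by push_neg; linarith : ¬1 + (y - 1) / d1 < 0),
        if_pos (by linarith : (1:ℝ) < 1 + (y - 1) / d1)]
      field_simp
      ring
  set δ : ℝ → ℝ := fun y => Classical.choose (hsurj y) with hδdef
  have hBδ : ∀ y, B (δ y) = y := fun y => Classical.choose_spec (hsurj y)
  have hδB : ∀ x, δ (B x) = x := fun x => hmono.injective (hBδ (B x))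
  have hδmono : StrictMono δ := by
    intro a b hab
    have : B (δ a) < B (δ b) := by rw [hBδ, hBδ]; exact hab
    exact hmono.lt_iff_lt.mp this
  have hδsurj : Function.Surjective δ := fun x => ⟨B x, hδB x⟩
  have hδcont : Continuous δ := hδmono.monotone.continuous_of_surjective hδsurj
  have hδderiv : ∀ a, HasDerivAt δ (D (δ a))⁻¹ a := fun a =>
    HasDerivAt.of_local_left_inverse hδcont.continuousAt (hB (δ a)) (hDpos (δ a)).ne'
      (Filter.Eventually.of_forall hBδ)
  have hδ0 : δ 0 = 0 := by have := hδB 0; rwa [hB0] at this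
  have hδ1 : δ 1 = 1 := by have := hδB 1; rwa [hB1] at this
  have hδmaps : ∀ ω ∈ Icc (0:ℝ) 1, δ ω ∈ Icc (0:ℝ) 1 := by
    intro ω hω
    constructor
    · rw [← hδ0]; exact hδmono.monotone hω.1
    · rw [← hδ1]; exact hδmono.monotone hω.2
  have hderivδ : deriv δ = fun a => (D (δ a))⁻¹ := funext fun a => (hδderiv a).deriv
  refine ⟨δ, ⟨hδmaps, hδ0, hδ1, ?_, ?_, ?_⟩, ?_, ?_⟩
  · intro ω _
    rw [hderivδ]
    exact hδderiv ω
  · rw [hderivδ]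
    refine ContinuousOn.inv₀ ?_ (fun ω hω => ?_)
    · refine ContinuousOn.congr
        ((hβ.contDeriv.comp hδcont.continuousOn hδmaps).mono (by intro x hx; exact hx)) ?_
      intro ω hω
      simp only [Function.comp_apply]
      exact hDIcc (δ ω) (hδmaps ω hω)
    · exact (hDpos (δ ω)).ne'
  · intro ω _
    rw [hderivδ]
    exact inv_pos.mpr (hDpos (δ ω))
  · intro ω hω
    rw [← hBIcc ω hω, hδB]
  · intro ω hω
    rw [← hBIcc (δ ω) (hδmaps ω hω), hBδ]

end HellingerAux

/-- inverse symmetry (inverse consistency) of Hellinger alignment. -/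
theorem hellinger_inverse_symmetry (f₁ f₂ β γ : ℝ → ℝ)
    (h₁ : IsDensity f₁) (h₂ : IsDensity f₂)
    (hβ : IsWarping β) (hγ : IsWarping γ)
    (hinv₁ : ∀ ω ∈ Icc (0:ℝ) 1, γ (β ω) = ω)
    (hinv₂ : ∀ ω ∈ Icc (0:ℝ) 1, β (γ ω) = ω) :
    Hdist f₁ (act f₂ β) = Hdist (act f₁ γ) f₂ ∧
      ((∀ β', IsWarping β' → Hdist f₁ (act f₂ β) ≤ Hdist f₁ (act f₂ β')) →
        ∀ β', IsWarping β' → Hdist (act f₁ γ) f₂ ≤ Hdist (act f₁ β') f₂) := by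
  constructor
  · exact HellingerAux.key h₁ h₂ hβ hγ hinv₁
  · intro hmin β' hβ'
    obtain ⟨δ, hδ, _, hδinv₂⟩ := HellingerAux.exists_inverse hβ'
    calc Hdist (act f₁ γ) f₂ = Hdist f₁ (act f₂ β) := (HellingerAux.key h₁ h₂ hβ hγ hinv₁).symm
      _ ≤ Hdist f₁ (act f₂ δ) := hmin δ hδ
      _ = Hdist (act f₁ β') f₂ := HellingerAux.key h₁ h₂ hδ hβ' hδinv₂
end
end

section
/- The Fisher–Rao geodesic has constant speed: let f₁, f₂ ∈ 𝒫 with f₁ ≠ f₂, set θ = d_R(f₁, f₂) ∈ (0, π/2], and define α(τ)(ω) = ((sin((1−τ)θ)/sin θ)·√(f₁(ω)) + (sin(τθ)/sin θ)·√(f₂(ω)))² for τ ∈ [0,1]. Then for all τ₁, τ₂ ∈ [0,1], d_R(α(τ₁), α(τ₂)) = |τ₁ − τ₂| · θ; in particular the path α realizes the distance d_R(f₁, f₂). -/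
/-!
The map `f ↦ √f` sends densities to unit vectors of `L²[0,1]`, and `∫ √f₁ √f₂` is their inner
product, i.e. `cos θ`. The square roots of `α(τ)` are the spherical interpolants
`(sin((1-τ)θ) √f₁ + sin(τθ) √f₂) / sin θ` on the great circle through `√f₁` and `√f₂`, and the
sine addition formula gives them inner products `cos((τ₁ - τ₂)θ)`. Since `f₁ ≠ f₂` at a point
and both are continuous, the Hellinger integral `∫ (√f₁ - √f₂)² = 2 - 2 cos θ` is positive, so
`0 < θ ≤ π/2` and the coefficients are well defined.
-/

open MeasureTheory intervalIntegral Set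

noncomputable section

/-- The Fisher–Rao geodesic path between two densities. -/
def geo (f₁ f₂ : ℝ → ℝ) (τ ω : ℝ) : ℝ :=
  (Real.sin ((1 - τ) * dR f₁ f₂) / Real.sin (dR f₁ f₂) * Real.sqrt (f₁ ω)
    + Real.sin (τ * dR f₁ f₂) / Real.sin (dR f₁ f₂) * Real.sqrt (f₂ ω))^2

open Real

theorem slerp_coeff_inner_eq_cos {θ : ℝ} (hθ : sin θ ≠ 0) (τ₁ τ₂ : ℝ) :
    sin ((1 - τ₁) * θ) / sin θ * (sin ((1 - τ₂) * θ) / sin θ)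
      + sin (τ₁ * θ) / sin θ * (sin (τ₂ * θ) / sin θ)
      + (sin ((1 - τ₁) * θ) / sin θ * (sin (τ₂ * θ) / sin θ)
        + sin (τ₁ * θ) / sin θ * (sin ((1 - τ₂) * θ) / sin θ)) * cos θ
    = cos ((τ₁ - τ₂) * θ) := by
  rw [show (1 - τ₁) * θ = θ - τ₁ * θ by ring, show (1 - τ₂) * θ = θ - τ₂ * θ by ring,
    show (τ₁ - τ₂) * θ = τ₁ * θ - τ₂ * θ by ring]
  generalize τ₁ * θ = x, τ₂ * θ = y
  rw [sin_sub, sin_sub, cos_sub]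
  field_simp
  linear_combination (-(sin x * sin y)) * sin_sq_add_cos_sq θ

theorem integral_sqrt_mul_sqrt_nonneg (f₁ f₂ : ℝ → ℝ) :
    0 ≤ ∫ ω in (0:ℝ)..1, √(f₁ ω) * √(f₂ ω) :=
  integral_nonneg zero_le_one fun _ _ => by positivity

theorem dR_le_pi_div_two (f₁ f₂ : ℝ → ℝ) : dR f₁ f₂ ≤ π / 2 :=
  arccos_le_pi_div_two.2 (integral_sqrt_mul_sqrt_nonneg f₁ f₂)

theorem sqrt_geo (f₁ f₂ : ℝ → ℝ) {τ : ℝ} (hτ : τ ∈ Icc (0:ℝ) 1) (ω : ℝ) :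
    √(geo f₁ f₂ τ ω) = sin ((1 - τ) * dR f₁ f₂) / sin (dR f₁ f₂) * √(f₁ ω)
      + sin (τ * dR f₁ f₂) / sin (dR f₁ f₂) * √(f₂ ω) := by
  have hθ : dR f₁ f₂ ∈ Icc 0 π := ⟨arccos_nonneg _, arccos_le_pi _⟩
  have hsin : ∀ t ∈ Icc (0:ℝ) 1, 0 ≤ sin (t * dR f₁ f₂) := fun t ht =>
    sin_nonneg_of_nonneg_of_le_pi (mul_nonneg ht.1 hθ.1)
      (by nlinarith [ht.1, ht.2, hθ.1, hθ.2])
  have h1τ : 1 - τ ∈ Icc (0:ℝ) 1 := ⟨by linarith [hτ.2], by linarith [hτ.1]⟩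
  have hsinθ : 0 ≤ sin (dR f₁ f₂) := by simpa using hsin 1 (by simp)
  have hsin1τ := hsin _ h1τ
  have hsinτ := hsin _ hτ
  exact sqrt_sq (by positivity)

namespace IsDensity

variable {f f₁ f₂ : ℝ → ℝ}

theorem intervalIntegrable (hf : IsDensity f) : IntervalIntegrable f volume 0 1 :=
  hf.1.intervalIntegrable_of_Icc zero_le_one

theorem continuousOn_sqrt (hf : IsDensity f) : ContinuousOn (fun ω => √(f ω)) (Icc 0 1) :=
  continuous_sqrt.comp_continuousOn hf.1

theorem integral_lincomb_sqrt_mul (h₁ : IsDensity f₁) (h₂ : IsDensity f₂) (a b c d : ℝ) :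
    ∫ ω in (0:ℝ)..1, (a * √(f₁ ω) + b * √(f₂ ω)) * (c * √(f₁ ω) + d * √(f₂ ω))
      = a * c + b * d + (a * d + b * c) * ∫ ω in (0:ℝ)..1, √(f₁ ω) * √(f₂ ω) := by
  have hexpand : EqOn
      (fun ω => (a * √(f₁ ω) + b * √(f₂ ω)) * (c * √(f₁ ω) + d * √(f₂ ω)))
      (fun ω => a * c * f₁ ω + b * d * f₂ ω + (a * d + b * c) * (√(f₁ ω) * √(f₂ ω)))
      (uIcc 0 1) := by
    intro ω hω
    rw [uIcc_of_le zero_le_one] at hω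
    have e₁ := mul_self_sqrt (h₁.2.1 ω hω)
    have e₂ := mul_self_sqrt (h₂.2.1 ω hω)
    linear_combination a * c * e₁ + b * d * e₂
  have hprod : IntervalIntegrable (fun ω => √(f₁ ω) * √(f₂ ω)) volume 0 1 :=
    (h₁.continuousOn_sqrt.mul h₂.continuousOn_sqrt).intervalIntegrable_of_Icc zero_le_one
  have hi₁ := h₁.intervalIntegrable
  have hi₂ := h₂.intervalIntegrable
  rw [integral_congr hexpand,
    intervalIntegral.integral_add ((hi₁.const_mul _).add (hi₂.const_mul _)) (hprod.const_mul _),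
    intervalIntegral.integral_add (hi₁.const_mul _) (hi₂.const_mul _),
    intervalIntegral.integral_const_mul, intervalIntegral.integral_const_mul,
    intervalIntegral.integral_const_mul, h₁.2.2, h₂.2.2, mul_one, mul_one]

theorem integral_sq_sqrt_sub (h₁ : IsDensity f₁) (h₂ : IsDensity f₂) :
    ∫ ω in (0:ℝ)..1, (√(f₁ ω) - √(f₂ ω)) ^ 2
      = 2 - 2 * ∫ ω in (0:ℝ)..1, √(f₁ ω) * √(f₂ ω) := by
  convert integral_lincomb_sqrt_mul h₁ h₂ 1 (-1) 1 (-1) using 1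
  · congr 1 with ω; ring
  · ring

theorem integral_sqrt_mul_sqrt_le_one (h₁ : IsDensity f₁) (h₂ : IsDensity f₂) :
    ∫ ω in (0:ℝ)..1, √(f₁ ω) * √(f₂ ω) ≤ 1 := by
  have := integral_nonneg (μ := volume) zero_le_one fun ω _ => sq_nonneg (√(f₁ ω) - √(f₂ ω))
  linarith [h₁.integral_sq_sqrt_sub h₂]

theorem integral_sqrt_mul_sqrt_lt_one (h₁ : IsDensity f₁) (h₂ : IsDensity f₂)
    (hne : ∃ ω ∈ Icc (0:ℝ) 1, f₁ ω ≠ f₂ ω) :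
    ∫ ω in (0:ℝ)..1, √(f₁ ω) * √(f₂ ω) < 1 := by
  obtain ⟨ω₀, hω₀, hfne⟩ := hne
  have hsqrt_ne : √(f₁ ω₀) - √(f₂ ω₀) ≠ 0 := fun h =>
    hfne <| (sqrt_inj (h₁.2.1 ω₀ hω₀) (h₂.2.1 ω₀ hω₀)).1 (sub_eq_zero.1 h)
  have := integral_pos (f := fun ω => (√(f₁ ω) - √(f₂ ω)) ^ 2) zero_lt_one
    ((h₁.continuousOn_sqrt.sub h₂.continuousOn_sqrt).pow 2)
    (fun ω _ => sq_nonneg (√(f₁ ω) - √(f₂ ω))) ⟨ω₀, hω₀, by positivity⟩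
  linarith [h₁.integral_sq_sqrt_sub h₂]

theorem cos_dR (h₁ : IsDensity f₁) (h₂ : IsDensity f₂) :
    cos (dR f₁ f₂) = ∫ ω in (0:ℝ)..1, √(f₁ ω) * √(f₂ ω) :=
  cos_arccos (by linarith [integral_sqrt_mul_sqrt_nonneg f₁ f₂])
    (h₁.integral_sqrt_mul_sqrt_le_one h₂)

theorem dR_pos (h₁ : IsDensity f₁) (h₂ : IsDensity f₂)
    (hne : ∃ ω ∈ Icc (0:ℝ) 1, f₁ ω ≠ f₂ ω) : 0 < dR f₁ f₂ :=
  arccos_pos.2 (h₁.integral_sqrt_mul_sqrt_lt_one h₂ hne)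

theorem integral_sqrt_geo_mul_sqrt_geo (h₁ : IsDensity f₁) (h₂ : IsDensity f₂)
    (hne : ∃ ω ∈ Icc (0:ℝ) 1, f₁ ω ≠ f₂ ω) {τ₁ τ₂ : ℝ}
    (hτ₁ : τ₁ ∈ Icc (0:ℝ) 1) (hτ₂ : τ₂ ∈ Icc (0:ℝ) 1) :
    ∫ ω in (0:ℝ)..1, √(geo f₁ f₂ τ₁ ω) * √(geo f₁ f₂ τ₂ ω)
      = cos ((τ₁ - τ₂) * dR f₁ f₂) := by
  have hsin : sin (dR f₁ f₂) ≠ 0 := (sin_pos_of_pos_of_lt_pi (h₁.dR_pos h₂ hne)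
    ((dR_le_pi_div_two f₁ f₂).trans_lt (by linarith [pi_pos]))).ne'
  simp only [sqrt_geo f₁ f₂ hτ₁, sqrt_geo f₁ f₂ hτ₂]
  rw [h₁.integral_lincomb_sqrt_mul h₂, ← h₁.cos_dR h₂, slerp_coeff_inner_eq_cos hsin]

end IsDensity

/-- the Fisher–Rao geodesic has constant speed. -/
theorem geo_constant_speed (f₁ f₂ : ℝ → ℝ)
    (h₁ : IsDensity f₁) (h₂ : IsDensity f₂)
    (hne : ∃ ω ∈ Icc (0:ℝ) 1, f₁ ω ≠ f₂ ω) :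
    ∀ τ₁ ∈ Icc (0:ℝ) 1, ∀ τ₂ ∈ Icc (0:ℝ) 1,
      dR (geo f₁ f₂ τ₁) (geo f₁ f₂ τ₂) = |τ₁ - τ₂| * dR f₁ f₂ := by
  intro τ₁ hτ₁ τ₂ hτ₂
  have hθ := h₁.dR_pos h₂ hne
  have hdiff : |τ₁ - τ₂| ≤ 1 :=
    abs_sub_le_iff.2 ⟨by linarith [hτ₁.2, hτ₂.1], by linarith [hτ₁.1, hτ₂.2]⟩
  rw [dR, h₁.integral_sqrt_geo_mul_sqrt_geo h₂ hne hτ₁ hτ₂, ← cos_abs, abs_mul,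
    abs_of_pos hθ, arccos_cos (by positivity)]
  exact (mul_le_of_le_one_left hθ.le hdiff).trans
    ((dR_le_pi_div_two f₁ f₂).trans (by linarith [pi_pos]))
end
end

section
/- The nonparametric Fisher–Rao metric is invariant under the area-preserving warping action: let f ∈ 𝒫 with f(ω) > 0 for all ω, let v₁, v₂ : [0,1] → ℝ be continuous, let β ∈ Γ, and set f̃ = (f ∘ β)·β' and ṽₖ = (vₖ ∘ β)·β' for k = 1, 2. Then ∫₀¹ ṽ₁(ω) ṽ₂(ω) / f̃(ω) dω = ∫₀¹ v₁(ω) v₂(ω) / f(ω) dω. -/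
open MeasureTheory intervalIntegral Set

noncomputable section

/-- the nonparametric Fisher–Rao metric is invariant under the
area-preserving warping action. -/
theorem fisherRao_metric_invariant (f v₁ v₂ β : ℝ → ℝ)
    (hf : IsDensity f) (hfpos : ∀ ω ∈ Icc (0:ℝ) 1, 0 < f ω)
    (hv₁ : ContinuousOn v₁ (Icc (0:ℝ) 1)) (hv₂ : ContinuousOn v₂ (Icc (0:ℝ) 1))
    (hβ : IsWarping β) :
    (∫ ω in (0:ℝ)..1, act v₁ β ω * act v₂ β ω / act f β ω) =
      ∫ ω in (0:ℝ)..1, v₁ ω * v₂ ω / f ω := by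
  have huIcc : uIcc (0:ℝ) 1 = Icc (0:ℝ) 1 := uIcc_of_le zero_le_one
  have hg : ContinuousOn (fun u => v₁ u * v₂ u / f u) (Icc (0:ℝ) 1) :=
    (hv₁.mul hv₂).div hf.1 (fun x hx => (hfpos x hx).ne')
  have key := intervalIntegral.integral_comp_smul_deriv'
    (f := β) (f' := deriv β) (g := fun u => v₁ u * v₂ u / f u)
    (fun x hx => hβ.hasDeriv x (huIcc ▸ hx))
    (huIcc ▸ hβ.contDeriv)
    (hg.mono (by rw [huIcc]; exact image_subset_iff.mpr hβ.mapsTo))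
  rw [hβ.zero, hβ.one] at key
  rw [← key]
  apply intervalIntegral.integral_congr
  intro x hx
  rw [huIcc] at hx
  have hd := (hβ.derivPos x hx).ne'
  have hfne := (hfpos (β x) (hβ.mapsTo x hx)).ne'
  simp only [act, smul_eq_mul, Function.comp_apply]
  field_simp
end
end

section
/- Infinitesimal equivalence of the Kullback–Leibler divergence and the Fisher–Rao metric: let f ∈ 𝒫 with f(ω) > 0 for all ω, and let v : [0,1] → ℝ be continuous with ∫₀¹ v(ω) dω = 0 and v not identically zero. Then lim_{ε→0} KL(f ‖ f + εv) / ((εv, εv))_f = 1/2, where the limit is over ε ≠ 0 small enough that f + εv > 0 on [0,1]. -/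
open MeasureTheory intervalIntegral Set

noncomputable section

lemma log_taylor_bound {t : ℝ} (ht : |t| ≤ 1/2) :
    |Real.log (1 + t) - (t - t^2/2)| ≤ 2 * |t|^3 := by
  have h1 : |(-t)| < 1 := by rw [abs_neg]; linarith
  have := Real.abs_log_sub_add_sum_range_le h1 2
  have hsum : (∑ i ∈ Finset.range 2, (-t) ^ (i + 1) / (i + 1)) = -t + t^2/2 := by
    simp [Finset.sum_range_succ]; ring
  rw [hsum, show (1 : ℝ) - -t = 1 + t by ring, abs_neg] at this
  have h3 : |t|^(2+1) / (1 - |t|) ≤ 2 * |t|^3 := by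
    rw [show 2+1=3 from rfl, div_le_iff₀ (by linarith [abs_nonneg t])]
    nlinarith [mul_nonneg (pow_nonneg (abs_nonneg t) 3) (by linarith : (0:ℝ) ≤ 1 - 2*|t|)]
  calc |Real.log (1 + t) - (t - t^2/2)| = |(-t + t^2/2) + Real.log (1+t)| := by
        rw [show Real.log (1+t) - (t - t^2/2) = -t + t^2/2 + Real.log (1+t) by ring]
    _ ≤ _ := le_trans this h3

lemma integral_pos_aux {g : ℝ → ℝ} (hg : ContinuousOn g (Icc 0 1))
    (h0 : ∀ ω ∈ Icc (0:ℝ) 1, 0 ≤ g ω) (hx : ∃ ω ∈ Icc (0:ℝ) 1, 0 < g ω) :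
    0 < ∫ ω in (0:ℝ)..1, g ω := by
  obtain ⟨ω₀, hω₀, hg0⟩ := hx
  have hne : (nhdsWithin ω₀ (Ioo (0:ℝ) 1)).NeBot := by
    apply mem_closure_iff_nhdsWithin_neBot.mp
    rw [closure_Ioo (by norm_num : (0:ℝ) ≠ 1)]
    exact hω₀
  have hev : ∀ᶠ ω in nhdsWithin ω₀ (Ioo (0:ℝ) 1), 0 < g ω := by
    have hc : Filter.Tendsto g (nhdsWithin ω₀ (Ioo (0:ℝ) 1)) (nhds (g ω₀)) :=
      (hg ω₀ hω₀).mono_left (nhdsWithin_mono _ Ioo_subset_Icc_self)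
    exact hc.eventually (eventually_gt_nhds hg0)
  obtain ⟨ω₁, hω₁pos, hω₁⟩ := (hev.and eventually_mem_nhdsWithin).exists
  set S : Set ℝ := Ioo (0:ℝ) 1 ∩ g ⁻¹' (Ioi 0) with hS
  have hSopen : IsOpen S :=
    (hg.mono Ioo_subset_Icc_self).isOpen_inter_preimage isOpen_Ioo isOpen_Ioi
  have hSpos : 0 < volume S := hSopen.measure_pos volume ⟨ω₁, hω₁, hω₁pos⟩
  have hint : IntervalIntegrable g volume 0 1 :=
    (hg.mono (by rw [uIcc_of_le (by norm_num : (0:ℝ) ≤ 1)])).intervalIntegrable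
  have hae : 0 ≤ᵐ[volume.restrict (uIoc (0:ℝ) 1)] g := by
    rw [uIoc_of_le (by norm_num : (0:ℝ) ≤ 1)]
    filter_upwards [ae_restrict_mem measurableSet_Ioc] with ω hω
    exact h0 ω (Ioc_subset_Icc_self hω)
  rw [integral_pos_iff_support_of_nonneg_ae' hae hint]
  refine ⟨by norm_num, lt_of_lt_of_le hSpos (measure_mono ?_)⟩
  rintro ω ⟨hω1, hω2⟩
  exact ⟨ne_of_gt hω2, Ioo_subset_Ioc_self hω1⟩


/-- infinitesimal equivalence of the Kullback–Leibler divergence and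
the Fisher–Rao metric. -/
theorem kl_fisherRao_infinitesimal (f v : ℝ → ℝ)
    (hf : IsDensity f) (hfpos : ∀ ω ∈ Icc (0:ℝ) 1, 0 < f ω)
    (hv : ContinuousOn v (Icc (0:ℝ) 1))
    (hvint : (∫ ω in (0:ℝ)..1, v ω) = 0)
    (hvne : ∃ ω ∈ Icc (0:ℝ) 1, v ω ≠ 0) :
    Filter.Tendsto
      (fun ε : ℝ =>
        (∫ ω in (0:ℝ)..1, f ω * Real.log (f ω / (f ω + ε * v ω))) /
          (∫ ω in (0:ℝ)..1, (ε * v ω) * (ε * v ω) / f ω))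
      (nhdsWithin 0 {(0:ℝ)}ᶜ) (nhds (1/2)) := by
  have hIcc : uIcc (0:ℝ) 1 = Icc 0 1 := uIcc_of_le (by norm_num)
  have hIoc : uIoc (0:ℝ) 1 = Ioc 0 1 := uIoc_of_le (by norm_num)
  -- minimum of f
  obtain ⟨ω₀, hω₀, hmin⟩ := isCompact_Icc.exists_isMinOn
    (nonempty_Icc.mpr (by norm_num : (0:ℝ) ≤ 1)) hf.1
  set m := f ω₀ with hm_def
  have hm : 0 < m := hfpos ω₀ hω₀
  have hminf : ∀ ω ∈ Icc (0:ℝ) 1, m ≤ f ω := fun ω hω => hmin hω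
  -- bound for v
  obtain ⟨ω₂, hω₂, hmax⟩ := isCompact_Icc.exists_isMaxOn
    (nonempty_Icc.mpr (by norm_num : (0:ℝ) ≤ 1)) hv.abs
  set B := |v ω₂| + 1 with hB_def
  have hB : 0 < B := by positivity
  have hvB : ∀ ω ∈ Icc (0:ℝ) 1, |v ω| ≤ B := fun ω hω => by
    have : |v ω| ≤ |v ω₂| := hmax hω
    simp only [hB_def]; linarith
  set δ := m / (2 * B) with hδ_def
  have hδ : 0 < δ := by positivity
  set I := ∫ ω in (0:ℝ)..1, v ω * v ω / f ω with hI_def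
  have hvvf_cont : ContinuousOn (fun ω => v ω * v ω / f ω) (Icc (0:ℝ) 1) :=
    (hv.mul hv).div hf.1 (fun ω hω => (hfpos ω hω).ne')
  have hI : 0 < I := by
    apply integral_pos_aux hvvf_cont
    · exact fun ω hω => div_nonneg (mul_self_nonneg _) (hfpos ω hω).le
    · obtain ⟨ω₃, hω₃, hvω₃⟩ := hvne
      exact ⟨ω₃, hω₃, div_pos (mul_self_pos.mpr hvω₃) (hfpos ω₃ hω₃)⟩
  set K := 2 * B^3 / m^2 with hK_def
  have hK : 0 < K := by positivity
  -- key facts for small ε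
  have key : ∀ ε : ℝ, |ε| ≤ δ →
      |(∫ ω in (0:ℝ)..1, f ω * Real.log (f ω / (f ω + ε * v ω))) - ε^2/2 * I|
        ≤ K * |ε|^3 := by
    intro ε hε
    -- positivity of f + εv on Icc
    have hfv : ∀ ω ∈ Icc (0:ℝ) 1, m/2 ≤ f ω + ε * v ω := by
      intro ω hω
      have h1 : |ε * v ω| ≤ m/2 := by
        rw [abs_mul]
        calc |ε| * |v ω| ≤ δ * B :=
              mul_le_mul hε (hvB ω hω) (abs_nonneg _) hδ.le
          _ = m/2 := by rw [hδ_def, div_mul_eq_mul_div, div_eq_iff (by positivity)]; ring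
      have h2 := hminf ω hω
      have := abs_le.mp h1
      linarith
    have hfvpos : ∀ ω ∈ Icc (0:ℝ) 1, 0 < f ω + ε * v ω :=
      fun ω hω => lt_of_lt_of_le (by linarith) (hfv ω hω)
    -- remainder function
    set g : ℝ → ℝ := fun ω => f ω * Real.log (f ω / (f ω + ε * v ω)) + ε * v ω
      - ε^2/2 * (v ω * v ω / f ω) with hg_def
    -- pointwise bound on g
    have hgbd : ∀ ω ∈ Icc (0:ℝ) 1, |g ω| ≤ K * |ε|^3 := by
      intro ω hω
      have hfω := hfpos ω hω
      set t := ε * v ω / f ω with ht_def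
      have ht : |t| ≤ 1/2 := by
        rw [ht_def, abs_div, abs_of_pos hfω, div_le_iff₀ hfω, abs_mul]
        have h1 : |ε| * |v ω| ≤ δ * B :=
          mul_le_mul hε (hvB ω hω) (abs_nonneg _) hδ.le
        have h2 : δ * B = m/2 := by rw [hδ_def, div_mul_eq_mul_div, div_eq_iff (by positivity)]; ring
        have h3 := hminf ω hω
        nlinarith
      have hlog : Real.log (f ω / (f ω + ε * v ω)) = -Real.log (1 + t) := by
        rw [← Real.log_inv]
        congr 1
        rw [ht_def]
        field_simp
      have hgeq : g ω = -(f ω * (Real.log (1 + t) - (t - t^2/2))) := by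
        rw [hg_def]
        simp only
        rw [hlog, ht_def]
        field_simp
        ring
      rw [hgeq, abs_neg, abs_mul, abs_of_pos hfω]
      calc f ω * |Real.log (1 + t) - (t - t^2/2)| ≤ f ω * (2 * |t|^3) :=
            mul_le_mul_of_nonneg_left (log_taylor_bound ht) hfω.le
        _ = 2 * |ε * v ω|^3 / f ω^2 := by
            rw [ht_def, abs_div, abs_of_pos hfω, div_pow]
            field_simp
        _ ≤ K * |ε|^3 := by
            rw [hK_def, abs_mul, mul_pow,
              show 2 * B^3 / m^2 * |ε|^3 = 2 * (|ε|^3 * B^3) / m^2 by ring]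
            have h4 : |v ω|^3 ≤ B^3 := pow_le_pow_left₀ (abs_nonneg _) (hvB ω hω) 3
            have h2 : m^2 ≤ f ω^2 := pow_le_pow_left₀ hm.le (hminf ω hω) 2
            apply div_le_div₀ (by positivity)
              (by nlinarith [pow_nonneg (abs_nonneg ε) 3]) (by positivity) h2
    -- continuity / integrability
    have hcont_log : ContinuousOn (fun ω => f ω * Real.log (f ω / (f ω + ε * v ω)))
        (Icc (0:ℝ) 1) := by
      apply hf.1.mul
      apply ContinuousOn.log
      · exact hf.1.div (hf.1.add (continuousOn_const.mul hv))
          (fun ω hω => (hfvpos ω hω).ne')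
      · exact fun ω hω => (div_pos (hfpos ω hω) (hfvpos ω hω)).ne'
    have hg_cont : ContinuousOn g (Icc (0:ℝ) 1) := by
      apply ContinuousOn.sub
      apply ContinuousOn.add hcont_log (continuousOn_const.mul hv)
      exact continuousOn_const.mul hvvf_cont
    have hint1 : IntervalIntegrable (fun ω => -(ε * v ω)) volume 0 1 :=
      ((continuousOn_const.mul hv).neg.mono (by rw [hIcc])).intervalIntegrable
    have hint2 : IntervalIntegrable (fun ω => ε^2/2 * (v ω * v ω / f ω)) volume 0 1 :=
      ((continuousOn_const.mul hvvf_cont).mono (by rw [hIcc])).intervalIntegrable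
    have hint3 : IntervalIntegrable g volume 0 1 :=
      (hg_cont.mono (by rw [hIcc])).intervalIntegrable
    have hsplit : (∫ ω in (0:ℝ)..1, f ω * Real.log (f ω / (f ω + ε * v ω)))
        = (∫ ω in (0:ℝ)..1, -(ε * v ω)) + (∫ ω in (0:ℝ)..1, ε^2/2 * (v ω * v ω / f ω))
          + ∫ ω in (0:ℝ)..1, g ω := by
      rw [← intervalIntegral.integral_add hint1 hint2,
        ← intervalIntegral.integral_add (hint1.add hint2) hint3]
      apply intervalIntegral.integral_congr
      intro ω _
      simp only [hg_def]
      ring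
    have h1 : (∫ ω in (0:ℝ)..1, -(ε * v ω)) = 0 := by
      rw [intervalIntegral.integral_neg, intervalIntegral.integral_const_mul, hvint]
      ring
    have h2 : (∫ ω in (0:ℝ)..1, ε^2/2 * (v ω * v ω / f ω)) = ε^2/2 * I := by
      rw [intervalIntegral.integral_const_mul, hI_def]
    rw [hsplit, h1, h2, zero_add, add_sub_cancel_left]
    calc |∫ ω in (0:ℝ)..1, g ω| ≤ K * |ε|^3 * |(1:ℝ) - 0| := by
          rw [← Real.norm_eq_abs]
          apply intervalIntegral.norm_integral_le_of_norm_le_const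
          intro x hx
          rw [hIoc] at hx
          rw [Real.norm_eq_abs]
          exact hgbd x (Ioc_subset_Icc_self hx)
      _ = K * |ε|^3 := by norm_num
  -- denominator
  have hden : ∀ ε : ℝ, (∫ ω in (0:ℝ)..1, (ε * v ω) * (ε * v ω) / f ω) = ε^2 * I := by
    intro ε
    rw [hI_def, ← intervalIntegral.integral_const_mul]
    apply intervalIntegral.integral_congr
    intro ω _
    ring
  -- squeeze
  have hev : ∀ᶠ ε in nhdsWithin (0:ℝ) {(0:ℝ)}ᶜ,
      ‖(fun ε : ℝ =>
        (∫ ω in (0:ℝ)..1, f ω * Real.log (f ω / (f ω + ε * v ω))) /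
          (∫ ω in (0:ℝ)..1, (ε * v ω) * (ε * v ω) / f ω)) ε - 1/2‖ ≤ K / I * |ε| := by
    have habs : ∀ᶠ ε in nhdsWithin (0:ℝ) {(0:ℝ)}ᶜ, |ε| < δ := by
      apply Filter.Eventually.filter_mono nhdsWithin_le_nhds
      have := Metric.ball_mem_nhds (0:ℝ) hδ
      filter_upwards [this] with ε hε
      simpa [Real.dist_eq] using hε
    filter_upwards [habs, eventually_mem_nhdsWithin] with ε hεδ (hεne : ε ∈ _)
    have hεne' : ε ≠ 0 := hεne
    have hkey := key ε hεδ.le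
    have hε2 : (0:ℝ) < ε^2 := by positivity
    rw [hden ε]
    have hεI : ε^2 * I ≠ 0 := by positivity
    have heq : (∫ ω in (0:ℝ)..1, f ω * Real.log (f ω / (f ω + ε * v ω))) / (ε^2 * I) - 1/2
        = ((∫ ω in (0:ℝ)..1, f ω * Real.log (f ω / (f ω + ε * v ω))) - ε^2/2 * I)
          / (ε^2 * I) := by
      rw [eq_div_iff hεI, sub_mul, div_mul_cancel₀ _ hεI]
      ring
    rw [Real.norm_eq_abs, heq, abs_div, abs_of_pos (by positivity : (0:ℝ) < ε^2 * I)]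
    rw [div_le_iff₀ (by positivity)]
    calc |(∫ ω in (0:ℝ)..1, f ω * Real.log (f ω / (f ω + ε * v ω))) - ε^2/2 * I|
        ≤ K * |ε|^3 := hkey
      _ = K / I * |ε| * (ε^2 * I) := by
          rw [show |ε|^3 = |ε|^2 * |ε| from pow_succ _ 2, sq_abs]
          field_simp
  have hlim : Filter.Tendsto (fun ε : ℝ => K / I * |ε|)
      (nhdsWithin (0:ℝ) {(0:ℝ)}ᶜ) (nhds 0) := by
    have h0 : Filter.Tendsto (fun ε : ℝ => K / I * |ε|) (nhds 0) (nhds (K / I * |(0:ℝ)|)) :=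
      (continuous_const.mul continuous_abs).tendsto 0
    simp only [abs_zero, mul_zero] at h0
    exact h0.mono_left nhdsWithin_le_nhds
  have h3 := squeeze_zero_norm' hev hlim
  have h4 := h3.add_const (1/2 : ℝ)
  simpa using h4
end
end

section
/- Smooth monotone representation of warping functions: let w : [0,1] → ℝ be continuous, define W(s) = ∫₀ˢ w(u) du, C₁ = (∫₀¹ exp(W(s)) ds)⁻¹, and β(ω) = C₁ ∫₀^ω exp(W(s)) ds. Then β is a warping function (β(0) = 0, β(1) = 1, β continuously differentiable with β'(ω) > 0 for all ω), β is twice differentiable, and β satisfies the homogeneous linear differential equation β''(ω) = w(ω)·β'(ω) for all ω ∈ [0,1]. -/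
open MeasureTheory intervalIntegral Set

noncomputable section

/-- The warping function built from a weight function via the smooth monotone
transformation. -/
def betaOf (w : ℝ → ℝ) : ℝ → ℝ := fun ω =>
  (∫ s in (0:ℝ)..1, Real.exp (∫ u in (0:ℝ)..s, w u))⁻¹ *
    ∫ s in (0:ℝ)..ω, Real.exp (∫ u in (0:ℝ)..s, w u)

/-- smooth monotone representation of warping functions. -/
theorem smooth_monotone_representation (w : ℝ → ℝ) (hw : Continuous w) :
    IsWarping (betaOf w) ∧
      ∀ ω ∈ Icc (0:ℝ) 1,
        HasDerivAt (deriv (betaOf w)) (w ω * deriv (betaOf w) ω) ω := by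
  set E : ℝ → ℝ := fun s => Real.exp (∫ u in (0:ℝ)..s, w u) with hE_def
  have hWd : ∀ s : ℝ, HasDerivAt (fun x => ∫ u in (0:ℝ)..x, w u) (w s) s := fun s =>
    intervalIntegral.integral_hasDerivAt_right (hw.intervalIntegrable _ _)
      (hw.stronglyMeasurableAtFilter _ _) hw.continuousAt
  have hEd : ∀ s : ℝ, HasDerivAt E (w s * E s) s := fun s => by
    simpa [hE_def, mul_comm] using (hWd s).exp
  have hEcont : Continuous E := continuous_iff_continuousAt.2 fun s => (hEd s).continuousAt
  have hEpos : ∀ s, 0 < E s := fun s => Real.exp_pos _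
  set I : ℝ := ∫ s in (0:ℝ)..1, E s with hI_def
  have hIpos : 0 < I :=
    intervalIntegral.intervalIntegral_pos_of_pos (hEcont.intervalIntegrable _ _)
      (fun s => hEpos s) one_pos
  have hβeq : betaOf w = fun ω => I⁻¹ * ∫ s in (0:ℝ)..ω, E s := rfl
  have hβd : ∀ ω : ℝ, HasDerivAt (betaOf w) (I⁻¹ * E ω) ω := fun ω => by
    rw [hβeq]
    exact (intervalIntegral.integral_hasDerivAt_right (hEcont.intervalIntegrable _ _)
      (hEcont.stronglyMeasurableAtFilter _ _) hEcont.continuousAt).const_mul _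
  have hderiv : deriv (betaOf w) = fun ω => I⁻¹ * E ω := funext fun ω => (hβd ω).deriv
  have hdpos : ∀ ω : ℝ, 0 < deriv (betaOf w) ω := fun ω => by
    rw [hderiv]; exact mul_pos (inv_pos.2 hIpos) (hEpos ω)
  have hmono : StrictMono (betaOf w) := strictMono_of_deriv_pos hdpos
  have hzero : betaOf w 0 = 0 := by simp [hβeq]
  have hone : betaOf w 1 = 1 := by
    rw [hβeq]; exact inv_mul_cancel₀ hIpos.ne'
  refine ⟨⟨fun ω hω => ?_, hzero, hone, fun ω _ => hβd ω |>.congr_deriv ((hβd ω).deriv).symm,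
      ?_, fun ω _ => hdpos ω⟩, fun ω _ => ?_⟩
  · constructor
    · rw [← hzero]; exact hmono.monotone hω.1
    · rw [← hone]; exact hmono.monotone hω.2
  · rw [hderiv]
    exact (continuous_const.mul hEcont).continuousOn
  · rw [hderiv]
    have : HasDerivAt (fun ω => I⁻¹ * E ω) (I⁻¹ * (w ω * E ω)) ω := (hEd ω).const_mul _
    convert this using 1
    ring
end
end
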